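/- Let 1 < q₁ < q₂ < ∞. Then there exists a log-Hölder continuous function p : [0,2π] → [q₁,q₂] with p(0) = p(2π) such that for every constant q with q₁ ≤ q ≤ q₂, the set {F : 𝔻 → ℂ analytic : sup_{0≤r<1} ∫₀^{2π} |F(re^{iθ})|^{p(θ)} dθ < ∞} is not equal to the set {F : 𝔻 → ℂ analytic : sup_{0≤r<1} ∫₀^{2π} |F(re^{iθ})|^{q} dθ < ∞}. -/

import Mathlib

/-!
The exponent is the tent `p(θ) = q₁ + (q₂ - q₁) |θ - π| / π`: it equals `q₂` at `0` and `2π`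
and `q₁` at `π`, and it is Lipschitz, hence log-Hölder. The test functions are the boundary poles
`F(z) = (1 - e^{-iφ} z)^{-c}`. With `d` the distance from `θ - φ` to `2πℤ`, one has
`|F(re^{iθ})| ≤ (d / π)^{-c}` for all `r < 1`, while `|F((1 - ε)e^{iθ})| ≥ (2ε)^{-c}` for
`0 < θ - φ < ε`. Hence `sup_r ∫ |F|^{p(θ)} dθ` is finite when `c p(φ) < 1` and infinite when
`c p(φ) > 1`; near the pole a log-Hölder exponent only costs the bounded factor `d^{-d}`.
For `q < q₂` a pole at `1` with `c q < 1 < c q₂` lies in `H^q` but not in `H^{p(·)}`;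
for `q = q₂` a pole at `-1` with `c q₁ < 1 < c q₂` lies in `H^{p(·)}` but not in `H^{q₂}`.
-/

open MeasureTheory Complex Set Filter Topology
open scoped ENNReal Real

lemma abs_one_sub_le_norm_one_sub_mul {u : ℂ} (hu : ‖u‖ = 1) {r : ℝ} (hr : 0 ≤ r) :
    |1 - r| ≤ ‖1 - r * u‖ := by
  simpa [norm_mul, hu, abs_of_nonneg hr] using abs_norm_sub_norm_le (1 : ℂ) (r * u)

lemma norm_one_sub_le_two_mul_norm_one_sub_mul {u : ℂ} (hu : ‖u‖ = 1) {r : ℝ} (hr : 0 ≤ r) :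
    ‖1 - u‖ ≤ 2 * ‖1 - r * u‖ := by
  have h : ‖(r : ℂ) * u - u‖ = |1 - r| := by
    rw [← sub_one_mul, norm_mul, hu, mul_one, ← ofReal_one, ← ofReal_sub, norm_real,
      Real.norm_eq_abs, abs_sub_comm]
  calc ‖1 - u‖ ≤ ‖1 - r * u‖ + ‖(r : ℂ) * u - u‖ := norm_sub_le_norm_sub_add_norm_sub _ _ _
    _ ≤ 2 * ‖1 - r * u‖ := by linarith [abs_one_sub_le_norm_one_sub_mul hu hr]

lemma norm_one_sub_mul_exp_le {r : ℝ} (hr₀ : 0 ≤ r) (hr₁ : r ≤ 1) (ψ : ℝ) :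
    ‖1 - r * exp (ψ * I)‖ ≤ 1 - r + |ψ| := by
  have h : ‖1 - exp (ψ * I)‖ ≤ |ψ| := by
    simpa [norm_sub_rev, mul_comm] using Real.norm_exp_I_mul_ofReal_sub_one_le (x := ψ)
  calc ‖1 - r * exp (ψ * I)‖ = ‖((1 - r : ℝ) : ℂ) + r * (1 - exp (ψ * I))‖ := by
        push_cast; ring_nf
    _ ≤ 1 - r + r * |ψ| := by
        refine (norm_add_le _ _).trans ?_
        rw [norm_real, Real.norm_eq_abs, abs_of_nonneg (by linarith), norm_mul, norm_real,
          Real.norm_eq_abs, abs_of_nonneg hr₀]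
        gcongr
    _ ≤ 1 - r + |ψ| := by nlinarith [abs_nonneg ψ]

lemma abs_le_mul_norm_one_sub_exp {ψ : ℝ} (hψ : |ψ| ≤ π) :
    |ψ| ≤ π / 2 * ‖1 - exp (ψ * I)‖ := by
  have hsin : 2 / π * |ψ / 2| ≤ |Real.sin (ψ / 2)| :=
    Real.mul_abs_le_abs_sin (by rw [abs_div, abs_two]; linarith)
  rw [norm_sub_rev, mul_comm (ψ : ℂ), norm_exp_I_mul_ofReal_sub_one, norm_mul,
    Real.norm_eq_abs, Real.norm_eq_abs, abs_two]
  rw [abs_div, abs_two] at hsin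
  have := Real.pi_pos
  field_simp at hsin ⊢
  linarith

lemma norm_coe_addCircle_le_pi (ψ : ℝ) : ‖(ψ : AddCircle (2 * π))‖ ≤ π := by
  have h := AddCircle.norm_le_half_period (2 * π) (x := (ψ : AddCircle (2 * π)))
    Real.two_pi_pos.ne'
  rwa [abs_of_pos Real.two_pi_pos, mul_div_cancel_left₀ _ two_ne_zero] at h

lemma norm_coe_addCircle_le_norm_one_sub_exp (ψ : ℝ) :
    ‖(ψ : AddCircle (2 * π))‖ ≤ π / 2 * ‖1 - exp (ψ * I)‖ := by
  obtain ⟨k, hk⟩ : ∃ k : ℤ, ‖(ψ : AddCircle (2 * π))‖ = |ψ - k * (2 * π)| :=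
    ⟨_, AddCircle.norm_eq _⟩
  have hexp : exp (ψ * I) = exp (((ψ - k * (2 * π) : ℝ) : ℂ) * I) := by
    push_cast
    rw [sub_mul, exp_sub, mul_assoc _ _ I, exp_int_mul_two_pi_mul_I k, div_one]
  have hπ := norm_coe_addCircle_le_pi ψ
  rw [hk] at hπ ⊢
  rw [hexp]
  exact abs_le_mul_norm_one_sub_exp hπ

lemma norm_coe_addCircle_le_pi_mul_norm_one_sub_mul_exp {r : ℝ} (hr : 0 ≤ r) (ψ : ℝ) :
    ‖(ψ : AddCircle (2 * π))‖ ≤ π * ‖1 - r * exp (ψ * I)‖ := by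
  have h := norm_one_sub_le_two_mul_norm_one_sub_mul (norm_exp_ofReal_mul_I ψ) hr
  have := norm_coe_addCircle_le_norm_one_sub_exp ψ
  nlinarith [Real.pi_pos]

lemma exists_norm_coe_addCircle_eq {p x : ℝ} (hp : 0 < p) (hx : |x| ≤ p) :
    ∃ k ∈ Finset.Icc (-1 : ℤ) 1, ‖(x : AddCircle p)‖ = |x - k * p| := by
  refine ⟨round (p⁻¹ * x), ?_, AddCircle.norm_eq p⟩
  have hround := abs_sub_round (p⁻¹ * x)
  have hy : |p⁻¹ * x| ≤ 1 := by
    rw [abs_mul, abs_inv, abs_of_pos hp, inv_mul_le_iff₀ hp, mul_one]; exact hx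
  have hk : |(round (p⁻¹ * x) : ℝ)| < 2 := by
    have := abs_sub_abs_le_abs_sub (round (p⁻¹ * x) : ℝ) (p⁻¹ * x)
    rw [abs_sub_comm] at this
    linarith
  rw [← Int.cast_abs, ← Int.cast_ofNat, Int.cast_lt, abs_lt] at hk
  rw [Finset.mem_Icc]
  omega

lemma mul_log_inv_le_one {t : ℝ} (ht : 0 < t) : t * Real.log t⁻¹ ≤ 1 := by
  have h := Real.log_le_sub_one_of_pos (inv_pos.2 ht)
  calc t * Real.log t⁻¹ ≤ t * (t⁻¹ - 1) := by gcongr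
    _ ≤ 1 := by rw [mul_sub, mul_inv_cancel₀ ht.ne']; linarith

lemma rpow_neg_mul_self_le_exp {x M : ℝ} (hx : 0 < x) (hM : 0 ≤ M) :
    x ^ (-(M * x)) ≤ Real.exp M := by
  rw [Real.rpow_def_of_pos hx, Real.exp_le_exp]
  have h := mul_log_inv_le_one hx
  rw [Real.log_inv] at h
  nlinarith

lemma le_div_log_one_div_of_le_mul {a L t : ℝ} (hL : 0 ≤ L) (ht₀ : 0 < t) (ht₁ : t < 1)
    (h : a ≤ L * t) : a ≤ L / Real.log (1 / t) := by
  have hlog : 0 < Real.log (1 / t) := Real.log_pos (one_lt_one_div ht₀ ht₁)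
  rw [le_div_iff₀ hlog]
  calc a * Real.log (1 / t) ≤ L * (t * Real.log t⁻¹) := by
        rw [← one_div]; nlinarith
    _ ≤ L := mul_le_of_le_one_right hL (mul_log_inv_le_one ht₀)

lemma integrableOn_abs_sub_rpow {s : ℝ} (hs : -1 < s) (t a b : ℝ) :
    IntegrableOn (fun θ => |θ - t| ^ s) (Ioc a b) := by
  have h : IntervalIntegrable (fun x : ℝ => ‖(x : ℂ) ^ (s : ℂ)‖) volume (a - t) (b - t) :=
    (intervalIntegral.intervalIntegrable_cpow' (by simpa using hs)).norm
  have h' := h.comp_sub_right t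
  simp only [sub_add_cancel, norm_cpow_real, norm_real, Real.norm_eq_abs] at h'
  exact (intervalIntegrable_iff.1 h').mono_set Ioc_subset_uIoc

lemma eq_top_of_forall_ofReal_mul_rpow_le {S : ℝ≥0∞} {C σ ε₀ : ℝ} (hC : 0 < C) (hσ : σ < 0)
    (hε₀ : 0 < ε₀) (h : ∀ ε ∈ Ioc 0 ε₀, ENNReal.ofReal (C * ε ^ σ) ≤ S) : S = ⊤ := by
  have hlim : Tendsto (fun ε : ℝ => ENNReal.ofReal (C * ε ^ σ)) (𝓝[>] 0) (𝓝 ⊤) :=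
    ENNReal.tendsto_ofReal_atTop.comp ((tendsto_rpow_neg_nhdsGT_zero hσ).const_mul_atTop hC)
  exact top_le_iff.1 (le_of_tendsto hlim (eventually_of_mem (Ioc_mem_nhdsGT hε₀) h))

noncomputable def hardyMeanSup (F : ℂ → ℂ) (e : ℝ → ℝ) : ℝ≥0∞ :=
  ⨆ r ∈ Ico (0 : ℝ) 1, ∫⁻ θ in Ioc (0 : ℝ) (2 * π), ENNReal.ofReal ‖F (r * exp (θ * I))‖ ^ e θ

def variableHardySpace (e : ℝ → ℝ) : Set (ℂ → ℂ) :=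
  {F | DifferentiableOn ℂ F (Metric.ball 0 1) ∧ hardyMeanSup F e < ⊤}

lemma le_hardyMeanSup (F : ℂ → ℂ) (e : ℝ → ℝ) {r : ℝ} (hr : r ∈ Ico (0 : ℝ) 1) :
    ∫⁻ θ in Ioc (0 : ℝ) (2 * π), ENNReal.ofReal ‖F (r * exp (θ * I))‖ ^ e θ ≤
      hardyMeanSup F e :=
  le_iSup₂ (f := fun r (_ : r ∈ Ico (0 : ℝ) 1) => ∫⁻ θ in Ioc (0 : ℝ) (2 * π),
    ENNReal.ofReal ‖F (r * exp (θ * I))‖ ^ e θ) r hr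

lemma hardyMeanSup_le {F : ℂ → ℂ} {e : ℝ → ℝ} {S : ℝ≥0∞}
    (h : ∀ r ∈ Ico (0 : ℝ) 1,
      ∫⁻ θ in Ioc (0 : ℝ) (2 * π), ENNReal.ofReal ‖F (r * exp (θ * I))‖ ^ e θ ≤ S) :
    hardyMeanSup F e ≤ S :=
  iSup₂_le h

noncomputable def boundaryPole (c φ : ℝ) (z : ℂ) : ℂ := (1 - exp (-φ * I) * z) ^ (-c : ℂ)

lemma differentiableOn_boundaryPole (c φ : ℝ) :
    DifferentiableOn ℂ (boundaryPole c φ) (Metric.ball 0 1) := by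
  intro z hz
  have hz : ‖exp (-φ * I) * z‖ < 1 := by
    simpa [norm_mul, norm_exp_ofReal_mul_I, ← ofReal_neg] using hz
  have hslit : 1 - exp (-φ * I) * z ∈ slitPlane := by
    refine Or.inl ?_
    rw [sub_re, one_re]
    linarith [re_le_norm (exp (-φ * I) * z)]
  exact ((differentiableAt_const _).sub (differentiableAt_id.const_mul _)).cpow
    (differentiableAt_const _) hslit |>.differentiableWithinAt

lemma norm_boundaryPole (c φ r θ : ℝ) :
    ‖boundaryPole c φ (r * exp (θ * I))‖ = ‖1 - r * exp ((θ - φ : ℝ) * I)‖ ^ (-c) := by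
  have h : exp (-φ * I) * (r * exp (θ * I)) = r * exp ((θ - φ : ℝ) * I) := by
    rw [mul_left_comm, ← exp_add]
    push_cast
    ring_nf
  rw [boundaryPole, h, ← ofReal_neg, norm_cpow_real]

lemma ofReal_norm_boundaryPole_rpow_le {c φ r θ e₀ L x : ℝ} (hc : 0 ≤ c) (hL : 0 ≤ L)
    (hr : 0 ≤ r) (hd : 0 < ‖((θ - φ : ℝ) : AddCircle (2 * π))‖) (hx₀ : 0 ≤ x)
    (hx : x ≤ e₀ + L * ‖((θ - φ : ℝ) : AddCircle (2 * π))‖) :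
    ENNReal.ofReal ‖boundaryPole c φ (r * exp (θ * I))‖ ^ x ≤
      ENNReal.ofReal (Real.exp (π * c * L) * π ^ (c * e₀) *
        ‖((θ - φ : ℝ) : AddCircle (2 * π))‖ ^ (-(c * e₀))) := by
  set d := ‖((θ - φ : ℝ) : AddCircle (2 * π))‖
  set A := ‖1 - r * exp ((θ - φ : ℝ) * I)‖
  have hπ := Real.pi_pos
  have hδ : 0 < d / π := div_pos hd hπ
  have hδ₁ : d / π ≤ 1 := (div_le_one hπ).2 (norm_coe_addCircle_le_pi _)
  have hδA : d / π ≤ A :=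
    (div_le_iff₀' hπ).2 (norm_coe_addCircle_le_pi_mul_norm_one_sub_mul_exp hr _)
  have hexp : -(c * e₀) - π * c * L * (d / π) ≤ -(c * x) := by
    have h : π * c * L * (d / π) = c * (L * d) := by field_simp
    rw [h]
    nlinarith
  rw [ENNReal.ofReal_rpow_of_nonneg (norm_nonneg _) hx₀, norm_boundaryPole]
  refine ENNReal.ofReal_le_ofReal ?_
  calc (A ^ (-c)) ^ x = A ^ (-(c * x)) := by rw [← Real.rpow_mul (norm_nonneg _), neg_mul]
    _ ≤ (d / π) ^ (-(c * x)) := Real.rpow_le_rpow_of_nonpos hδ hδA (by nlinarith)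
    _ ≤ (d / π) ^ (-(c * e₀) - π * c * L * (d / π)) :=
        Real.rpow_le_rpow_of_exponent_ge hδ hδ₁ hexp
    _ = (d / π) ^ (-(c * e₀)) * (d / π) ^ (-(π * c * L * (d / π))) := by
        rw [sub_eq_add_neg, Real.rpow_add hδ]
    _ ≤ (d / π) ^ (-(c * e₀)) * Real.exp (π * c * L) := by
        gcongr
        exact rpow_neg_mul_self_le_exp hδ (by positivity)
    _ = Real.exp (π * c * L) * π ^ (c * e₀) * d ^ (-(c * e₀)) := by
        rw [Real.div_rpow hd.le hπ.le, Real.rpow_neg hπ.le, div_inv_eq_mul]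
        ring

lemma ofReal_rpow_le_norm_boundaryPole_rpow {c φ θ ε s x : ℝ} (hε : 0 < ε) (hε' : ε ≤ 1 / 2)
    (hθ : θ ∈ Ioo φ (φ + ε)) (hs : 0 ≤ s) (hsx : s ≤ c * x) :
    ENNReal.ofReal ((2 * ε) ^ (-s)) ≤
      ENNReal.ofReal ‖boundaryPole c φ ((1 - ε : ℝ) * exp (θ * I))‖ ^ x := by
  set A := ‖1 - (1 - ε : ℝ) * exp ((θ - φ : ℝ) * I)‖
  have hεA : ε ≤ A := by
    have h := abs_one_sub_le_norm_one_sub_mul (norm_exp_ofReal_mul_I (θ - φ))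
      (r := 1 - ε) (by linarith)
    rwa [sub_sub_cancel, abs_of_pos hε] at h
  have hA : A ≤ 2 * ε := by
    have := norm_one_sub_mul_exp_le (r := 1 - ε) (by linarith) (by linarith) (θ - φ)
    rw [abs_of_pos (sub_pos.2 hθ.1)] at this
    linarith [hθ.2]
  have hApos : 0 < A := hε.trans_le hεA
  rw [norm_boundaryPole, ENNReal.ofReal_rpow_of_pos (Real.rpow_pos_of_pos hApos _)]
  refine ENNReal.ofReal_le_ofReal ?_
  calc (2 * ε) ^ (-s) ≤ (2 * ε) ^ (-(c * x)) :=
        Real.rpow_le_rpow_of_exponent_ge (by positivity) (by linarith) (by linarith)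
    _ ≤ A ^ (-(c * x)) := Real.rpow_le_rpow_of_nonpos hApos hA (by linarith)
    _ = (A ^ (-c)) ^ x := by rw [← Real.rpow_mul hApos.le, neg_mul]

theorem hardyMeanSup_boundaryPole_lt_top {c φ e₀ L : ℝ} {e : ℝ → ℝ} (hc : 0 ≤ c) (hL : 0 ≤ L)
    (hφ : φ ∈ Icc 0 (2 * π)) (hce : c * e₀ < 1)
    (he : ∀ θ ∈ Ioc 0 (2 * π),
      0 ≤ e θ ∧ e θ ≤ e₀ + L * ‖((θ - φ : ℝ) : AddCircle (2 * π))‖) :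
    hardyMeanSup (boundaryPole c φ) e < ⊤ := by
  set C := Real.exp (π * c * L) * π ^ (c * e₀)
  let poles := (Finset.Icc (-1 : ℤ) 1).image fun k : ℤ => φ + k * (2 * π)
  let g θ := C * ∑ t ∈ poles, |θ - t| ^ (-(c * e₀))
  have hg : IntegrableOn g (Ioc 0 (2 * π)) :=
    (integrable_finsetSum _ fun t _ => integrableOn_abs_sub_rpow (by linarith) t _ _).const_mul C
  refine lt_of_le_of_lt (hardyMeanSup_le fun r hr => ?_) hg.lintegral_lt_top
  refine setLIntegral_mono_ae' measurableSet_Ioc ?_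
  filter_upwards [measure_eq_zero_iff_ae_notMem.1 (poles.finite_toSet.measure_zero volume)]
    with θ hθpoles hθ
  obtain ⟨k, hk, hd⟩ := exists_norm_coe_addCircle_eq (x := θ - φ) Real.two_pi_pos
    (abs_le.2 ⟨by linarith [hθ.1, hφ.2], by linarith [hθ.2, hφ.1]⟩)
  rw [sub_sub] at hd
  have hpole : φ + k * (2 * π) ∈ poles := Finset.mem_image_of_mem _ hk
  have hdpos : 0 < ‖((θ - φ : ℝ) : AddCircle (2 * π))‖ := by
    rw [hd, abs_pos, sub_ne_zero]
    exact fun h => hθpoles (h ▸ hpole)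
  refine (ofReal_norm_boundaryPole_rpow_le hc hL hr.1 hdpos (he θ hθ).1 (he θ hθ).2).trans ?_
  refine ENNReal.ofReal_le_ofReal (mul_le_mul_of_nonneg_left ?_ (by positivity))
  rw [hd]
  exact Finset.single_le_sum (f := fun t => |θ - t| ^ (-(c * e₀)))
    (fun t _ => by positivity) hpole

theorem hardyMeanSup_boundaryPole_eq_top {c φ : ℝ} {e : ℝ → ℝ} (hφ : φ ∈ Ico 0 (2 * π))
    (he : ContinuousWithinAt e (Ioi φ) φ) (hce : 1 < c * e φ) :
    hardyMeanSup (boundaryPole c φ) e = ⊤ := by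
  obtain ⟨s, hs, hsc⟩ := exists_between hce
  obtain ⟨u, hu, hsub⟩ := mem_nhdsGT_iff_exists_Ioo_subset.1
    ((he.const_mul c).eventually_const_lt hsc)
  have hε₀ : 0 < min (min (u - φ) (1 / 2)) (2 * π - φ) := by
    simp only [lt_min_iff]; exact ⟨⟨sub_pos.2 hu, by norm_num⟩, by linarith [hφ.2]⟩
  refine eq_top_of_forall_ofReal_mul_rpow_le (C := 2 ^ (-s)) (σ := 1 - s) (by positivity)
    (by linarith) hε₀ fun ε ⟨hε, hεle⟩ => ?_
  simp only [le_min_iff] at hεle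
  obtain ⟨⟨hεu, hεhalf⟩, hε2π⟩ := hεle
  have hr : 1 - ε ∈ Ico (0 : ℝ) 1 := ⟨by linarith, by linarith⟩
  calc ENNReal.ofReal (2 ^ (-s) * ε ^ (1 - s))
      = ENNReal.ofReal ((2 * ε) ^ (-s)) * volume (Ioo φ (φ + ε)) := by
        rw [Real.volume_Ioo, add_sub_cancel_left, ← ENNReal.ofReal_mul (by positivity),
          Real.mul_rpow (by norm_num) hε.le, sub_eq_add_neg, add_comm, Real.rpow_add hε,
          Real.rpow_one, mul_assoc]
    _ = ∫⁻ _ in Ioo φ (φ + ε), ENNReal.ofReal ((2 * ε) ^ (-s)) := (setLIntegral_const _ _).symm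
    _ ≤ ∫⁻ θ in Ioo φ (φ + ε),
          ENNReal.ofReal ‖boundaryPole c φ ((1 - ε : ℝ) * exp (θ * I))‖ ^ e θ :=
        setLIntegral_mono' measurableSet_Ioo fun θ hθ =>
          ofReal_rpow_le_norm_boundaryPole_rpow hε hεhalf hθ (by linarith)
            (hsub ⟨hθ.1, by linarith [hθ.2]⟩).le
    _ ≤ ∫⁻ θ in Ioc 0 (2 * π),
          ENNReal.ofReal ‖boundaryPole c φ ((1 - ε : ℝ) * exp (θ * I))‖ ^ e θ :=
        lintegral_mono_set (Ioo_subset_Ioc_self.trans (Ioc_subset_Ioc hφ.1 (by linarith)))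
    _ ≤ hardyMeanSup (boundaryPole c φ) e := le_hardyMeanSup _ _ hr

noncomputable def tentExponent (q₁ q₂ θ : ℝ) : ℝ := q₁ + (q₂ - q₁) / π * |θ - π|

lemma tentExponent_mem_Icc {q₁ q₂ θ : ℝ} (h : q₁ ≤ q₂) (hθ : θ ∈ Icc 0 (2 * π)) :
    tentExponent q₁ q₂ θ ∈ Icc q₁ q₂ := by
  have hπ := Real.pi_pos
  have habs : |θ - π| / π ≤ 1 :=
    (div_le_one hπ).2 (abs_le.2 ⟨by linarith [hθ.1], by linarith [hθ.2]⟩)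
  have hslope : 0 ≤ (q₂ - q₁) / π := div_nonneg (sub_nonneg.2 h) hπ.le
  constructor
  · unfold tentExponent; nlinarith [abs_nonneg (θ - π)]
  · unfold tentExponent
    rw [div_mul_comm]
    nlinarith

lemma tentExponent_zero (q₁ q₂ : ℝ) : tentExponent q₁ q₂ 0 = q₂ := by
  simp [tentExponent, abs_of_pos Real.pi_pos, Real.pi_pos.ne']

lemma tentExponent_two_pi (q₁ q₂ : ℝ) : tentExponent q₁ q₂ (2 * π) = q₂ := by
  rw [tentExponent, show 2 * π - π = π by ring, abs_of_pos Real.pi_pos,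
    div_mul_cancel₀ _ Real.pi_pos.ne', add_sub_cancel]

lemma abs_tentExponent_sub_le {q₁ q₂ : ℝ} (h : q₁ ≤ q₂) (x y : ℝ) :
    |tentExponent q₁ q₂ x - tentExponent q₁ q₂ y| ≤ (q₂ - q₁) / π * |x - y| := by
  have hslope : 0 ≤ (q₂ - q₁) / π := div_nonneg (sub_nonneg.2 h) Real.pi_pos.le
  rw [tentExponent, tentExponent, add_sub_add_left_eq_sub, ← mul_sub, abs_mul,
    abs_of_nonneg hslope]
  refine mul_le_mul_of_nonneg_left ?_ hslope
  simpa using abs_abs_sub_abs_le_abs_sub (x - π) (y - π)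

lemma continuous_tentExponent (q₁ q₂ : ℝ) : Continuous (tentExponent q₁ q₂) := by
  unfold tentExponent; fun_prop

lemma tentExponent_eq_add_norm_coe_addCircle (q₁ q₂ : ℝ) {θ : ℝ} (hθ : θ ∈ Icc 0 (2 * π)) :
    tentExponent q₁ q₂ θ = q₁ + (q₂ - q₁) / π * ‖((θ - π : ℝ) : AddCircle (2 * π))‖ := by
  rw [tentExponent, (AddCircle.norm_coe_eq_abs_iff _ Real.two_pi_pos.ne').2]
  rw [abs_of_pos Real.two_pi_pos, mul_div_cancel_left₀ _ two_ne_zero]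
  exact abs_le.2 ⟨by linarith [hθ.1], by linarith [hθ.2]⟩

lemma variableHardySpace_tentExponent_ne_const_of_lt {q₁ q₂ q : ℝ} (hq : 0 ≤ q)
    (hqq₂ : q < q₂) :
    variableHardySpace (tentExponent q₁ q₂) ≠ variableHardySpace fun _ => q := by
  set c := 2 / (q + q₂)
  have hc : 0 < c := div_pos two_pos (by linarith)
  have hcq : c * q < 1 := by rw [div_mul_eq_mul_div, div_lt_one (by linarith)]; linarith
  have hcq₂ : 1 < c * q₂ := by rw [div_mul_eq_mul_div, one_lt_div (by linarith)]; linarith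
  have hmem : boundaryPole c 0 ∈ variableHardySpace fun _ => q :=
    ⟨differentiableOn_boundaryPole c 0, hardyMeanSup_boundaryPole_lt_top (L := 0) hc.le le_rfl
      ⟨le_rfl, Real.two_pi_pos.le⟩ hcq fun _ _ => ⟨hq, by simp⟩⟩
  have hnotMem : boundaryPole c 0 ∉ variableHardySpace (tentExponent q₁ q₂) := fun h =>
    h.2.ne (hardyMeanSup_boundaryPole_eq_top ⟨le_rfl, Real.two_pi_pos⟩
      (continuous_tentExponent q₁ q₂).continuousWithinAt (by rwa [tentExponent_zero]))
  exact fun h => hnotMem (h ▸ hmem)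

lemma variableHardySpace_tentExponent_ne_const_right {q₁ q₂ : ℝ} (hq₁ : 0 ≤ q₁) (h : q₁ < q₂) :
    variableHardySpace (tentExponent q₁ q₂) ≠ variableHardySpace fun _ => q₂ := by
  set c := 2 / (q₁ + q₂)
  have hc : 0 < c := div_pos two_pos (by linarith)
  have hcq₁ : c * q₁ < 1 := by rw [div_mul_eq_mul_div, div_lt_one (by linarith)]; linarith
  have hcq₂ : 1 < c * q₂ := by rw [div_mul_eq_mul_div, one_lt_div (by linarith)]; linarith
  have hmem : boundaryPole c π ∈ variableHardySpace (tentExponent q₁ q₂) := by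
    refine ⟨differentiableOn_boundaryPole c π, hardyMeanSup_boundaryPole_lt_top hc.le
      (div_nonneg (sub_nonneg.2 h.le) Real.pi_pos.le) ⟨Real.pi_pos.le, by linarith [Real.pi_pos]⟩
      hcq₁ fun θ hθ => ?_⟩
    have hθ' : θ ∈ Icc 0 (2 * π) := Ioc_subset_Icc_self hθ
    exact ⟨hq₁.trans (tentExponent_mem_Icc h.le hθ').1,
      (tentExponent_eq_add_norm_coe_addCircle q₁ q₂ hθ').le⟩
  have hnotMem : boundaryPole c π ∉ variableHardySpace fun _ => q₂ := fun h =>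
    h.2.ne (hardyMeanSup_boundaryPole_eq_top ⟨Real.pi_pos.le, by linarith [Real.pi_pos]⟩
      continuousWithinAt_const hcq₂)
  exact fun h => hnotMem (h ▸ hmem)

/-- for `1 < q₁ < q₂ < ∞` there exists a log-Hölder continuous exponent
`p : [0,2π] → [q₁,q₂]` with `p(0) = p(2π)` such that `H^{p(·)}(𝔻) ≠ H^q(𝔻)` for every
constant exponent `q ∈ [q₁,q₂]`. -/
theorem stmt13 (q₁ q₂ : ℝ) (h1 : 1 < q₁) (h12 : q₁ < q₂) :
    ∃ p : ℝ → ℝ,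
      (∀ θ ∈ Set.Icc (0:ℝ) (2*Real.pi), p θ ∈ Set.Icc q₁ q₂) ∧
      p 0 = p (2*Real.pi) ∧
      (∃ Clog : ℝ, 0 < Clog ∧ ∀ x ∈ Set.Icc (0:ℝ) (2*Real.pi),
        ∀ y ∈ Set.Icc (0:ℝ) (2*Real.pi), 0 < |x - y| → |x - y| < 1/2 →
          |p x - p y| ≤ Clog / Real.log (1/|x - y|)) ∧
      ∀ q : ℝ, q₁ ≤ q → q ≤ q₂ →
        {F : ℂ → ℂ | DifferentiableOn ℂ F (Metric.ball 0 1) ∧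
          (⨆ r ∈ Set.Ico (0:ℝ) 1,
            ∫⁻ θ in Set.Ioc (0:ℝ) (2*Real.pi),
              ENNReal.ofReal
                ‖F ((r : ℂ) * Complex.exp (θ * Complex.I))‖ ^ (p θ)) < ⊤}
        ≠
        {F : ℂ → ℂ | DifferentiableOn ℂ F (Metric.ball 0 1) ∧
          (⨆ r ∈ Set.Ico (0:ℝ) 1,
            ∫⁻ θ in Set.Ioc (0:ℝ) (2*Real.pi),
              ENNReal.ofReal
                ‖F ((r : ℂ) * Complex.exp (θ * Complex.I))‖ ^ q) < ⊤} := by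
  have hq₁ : 0 ≤ q₁ := by linarith
  have hslope : 0 < (q₂ - q₁) / π := div_pos (sub_pos.2 h12) Real.pi_pos
  refine ⟨tentExponent q₁ q₂, fun θ hθ => tentExponent_mem_Icc h12.le hθ,
    by rw [tentExponent_zero, tentExponent_two_pi], ⟨(q₂ - q₁) / π, hslope,
      fun x _ y _ hxy₀ hxy => le_div_log_one_div_of_le_mul hslope.le hxy₀ (by linarith)
        (abs_tentExponent_sub_le h12.le x y)⟩, fun q hq₁q hqq₂ => ?_⟩
  rcases hqq₂.lt_or_eq with hlt | rfl
  · exact variableHardySpace_tentExponent_ne_const_of_lt (by linarith) hlt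
  · exact variableHardySpace_tentExponent_ne_const_right hq₁ h12
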